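/- arXiv:1205.5435 — 5 statements merged into one kernel-verified Lean document; each statement's English description precedes it below -/
import Mathlib

section
/- Let v : [0,∞)×ℝ³ → ℝ³ be a smooth time-dependent vector field whose spatial divergence satisfies |(∇·v_t)(y)| ≤ N for all t ≥ 0 and y ∈ ℝ³, and which also satisfies |v_t(y)| ≤ A|y| + D for all t, y, where A > 0 and D ≥ 0. Let X be a flow of v such that each X_t : ℝ³ → ℝ³ is a bijection, let ρ₀ : ℝ³ → [0,∞) be measurable, and define ρ_t(x) := ρ₀(X_t^{−1}(x)) · exp(∫₀ᵗ (∇·v_s)(X_s(X_t^{−1}(x))) ds). Then for every r > 0, every t ≥ 0 and every x with |x| ≤ r, one has ρ_t(x) ≥ e^{−Nt} · inf { ρ₀(y) : |y| ≤ r e^{At} + D (e^{At} − 1)/A }. -/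
/-- Lower bound on the solution by characteristics of the
continuity equation, in terms of the infimum of the initial datum on an
enlarged ball. -/
theorem stmt_4
    (v : ℝ → EuclideanSpace ℝ (Fin 3) → EuclideanSpace ℝ (Fin 3)) (N A D : ℝ)
    (hA : 0 < A) (hD : 0 ≤ D)
    (hv_smooth : ContDiff ℝ (⊤ : ℕ∞) (Function.uncurry v))
    (hdiv : ∀ t ≥ (0:ℝ), ∀ y,
      |LinearMap.trace ℝ (EuclideanSpace ℝ (Fin 3)) (fderiv ℝ (v t) y).toLinearMap| ≤ N)
    (hv_growth : ∀ t ≥ (0:ℝ), ∀ y, ‖v t y‖ ≤ A * ‖y‖ + D)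
    (X Xinv : ℝ → EuclideanSpace ℝ (Fin 3) → EuclideanSpace ℝ (Fin 3))
    (hX0 : ∀ z, X 0 z = z)
    (hX : ∀ z, ∀ t ≥ (0:ℝ), HasDerivAt (fun s => X s z) (v t (X t z)) t)
    (hbij : ∀ t, Function.Bijective (X t))
    (hinv : ∀ t z, X t (Xinv t z) = z ∧ Xinv t (X t z) = z)
    (ρ₀ : EuclideanSpace ℝ (Fin 3) → ℝ)
    (hmeas : Measurable ρ₀) (hnonneg : ∀ y, 0 ≤ ρ₀ y)
    (ρ : ℝ → EuclideanSpace ℝ (Fin 3) → ℝ)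
    (hρ : ∀ t x, ρ t x = ρ₀ (Xinv t x) *
      Real.exp (∫ s in (0:ℝ)..t,
        LinearMap.trace ℝ (EuclideanSpace ℝ (Fin 3))
          (fderiv ℝ (v s) (X s (Xinv t x))).toLinearMap)) :
    ∀ r > (0:ℝ), ∀ t ≥ (0:ℝ), ∀ x, ‖x‖ ≤ r →
      Real.exp (-(N * t)) *
          sInf (ρ₀ '' Metric.closedBall 0
            (r * Real.exp (A * t) + D * (Real.exp (A * t) - 1) / A))
        ≤ ρ t x := by
  intro r hr t ht x hx
  set z := Xinv t x with hz
  have hXtz : X t z = x := (hinv t x).1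
  have hN : 0 ≤ N := le_trans (abs_nonneg _) (hdiv 0 le_rfl 0)
  set R : ℝ := r * Real.exp (A * t) + D * (Real.exp (A * t) - 1) / A with hR
  -- the derivative of s ↦ X (t - s) z
  have hder : ∀ s ∈ Set.Icc (0:ℝ) t,
      HasDerivAt (fun u => X (t - u) z) (-(v (t - s) (X (t - s) z))) s := by
    intro s hs
    have h1 : HasDerivAt (fun u => X u z) (v (t - s) (X (t - s) z)) (t - s) :=
      hX z (t - s) (by linarith [hs.2])
    have h2 : HasDerivAt (fun u : ℝ => t - u) (-1 : ℝ) s := by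
      simpa using (hasDerivAt_id s).const_sub t
    have := h1.scomp s h2
    simp only [neg_one_smul] at this
    exact this
  -- Gronwall bound backward in time
  have hzball : ‖z‖ ≤ R := by
    have key := norm_le_gronwallBound_of_norm_deriv_right_le
      (f := fun u => X (t - u) z) (f' := fun s => -(v (t - s) (X (t - s) z)))
      (δ := r) (K := A) (ε := D) (a := 0) (b := t)
      (fun s hs => (hder s hs).continuousAt.continuousWithinAt)
      (fun s hs => ((hder s ⟨hs.1, le_of_lt hs.2⟩).hasDerivWithinAt))
      (by simpa [hXtz] using hx)
      (fun s hs => by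
        rw [norm_neg]
        exact hv_growth (t - s) (by linarith [hs.2]) _)
      t ⟨ht, le_rfl⟩
    rw [gronwallBound_of_K_ne_0 (ne_of_gt hA)] at key
    simp only [sub_zero, sub_self, hX0] at key
    calc ‖z‖ ≤ r * Real.exp (A * t) + D / A * (Real.exp (A * t) - 1) := key
      _ = R := by rw [hR]; ring
  have hzmem : z ∈ Metric.closedBall (0 : EuclideanSpace ℝ (Fin 3)) R := by
    simpa [Metric.mem_closedBall, dist_eq_norm] using hzball
  have hne : (ρ₀ '' Metric.closedBall 0 R).Nonempty := ⟨ρ₀ z, z, hzmem, rfl⟩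
  have hbdd : BddBelow (ρ₀ '' Metric.closedBall 0 R) :=
    ⟨0, fun y ⟨w, _, hw⟩ => hw ▸ hnonneg w⟩
  have hInf_le : sInf (ρ₀ '' Metric.closedBall 0 R) ≤ ρ₀ z :=
    csInf_le hbdd ⟨z, hzmem, rfl⟩
  have hInf_nonneg : 0 ≤ sInf (ρ₀ '' Metric.closedBall 0 R) :=
    le_csInf hne (fun y ⟨w, _, hw⟩ => hw ▸ hnonneg w)
  -- bound on the integral
  set g : ℝ → ℝ := fun s => LinearMap.trace ℝ (EuclideanSpace ℝ (Fin 3))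
    (fderiv ℝ (v s) (X s z)).toLinearMap with hg
  have hint : -(N * t) ≤ ∫ s in (0:ℝ)..t, g s := by
    by_cases hI : IntervalIntegrable g MeasureTheory.volume 0 t
    · have h1 : ∫ s in (0:ℝ)..t, (-N : ℝ) ≤ ∫ s in (0:ℝ)..t, g s := by
        apply intervalIntegral.integral_mono_on ht intervalIntegrable_const hI
        intro s hs
        exact neg_le_of_abs_le (hdiv s hs.1 _)
      simpa [mul_comm, neg_mul, mul_neg] using h1
    · rw [intervalIntegral.integral_undef hI]
      nlinarith
  have hexp : Real.exp (-(N * t)) ≤ Real.exp (∫ s in (0:ℝ)..t, g s) :=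
    Real.exp_le_exp.mpr hint
  rw [hρ t x]
  calc Real.exp (-(N * t)) * sInf (ρ₀ '' Metric.closedBall 0 R)
      ≤ Real.exp (∫ s in (0:ℝ)..t, g s) * ρ₀ z :=
        mul_le_mul hexp hInf_le hInf_nonneg (Real.exp_nonneg _)
    _ = ρ₀ (Xinv t x) * Real.exp (∫ s in (0:ℝ)..t, g s) := by rw [mul_comm]
end

section
/- Let v : [0,∞)×ℝ³ → ℝ³ be a smooth time-dependent vector field whose spatial divergence satisfies |(∇·v_t)(y)| ≤ N for all t ≥ 0 and y ∈ ℝ³, and which also satisfies |v_t(y)| ≤ A|y| + D for all t, y, where A > 0 and D ≥ 0. Let X be a flow of v such that each X_t : ℝ³ → ℝ³ is a bijection, let ρ₀ : ℝ³ → [0,∞) be measurable, and define ρ_t(x) := ρ₀(X_t^{−1}(x)) · exp(∫₀ᵗ (∇·v_s)(X_s(X_t^{−1}(x))) ds). Assume there exist d₀ ≥ 0, K > 0 and M > 0 such that ρ₀(y) ≤ d₀/|y|^K whenever |y| ≥ M. Then for every t ≥ 0, ρ_t(x) ≤ d₀ 2^K e^{(N+AK)t}/|x|^K whenever |x| ≥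 2M e^{At} + 2D (e^{At} − 1)/A. -/
open Set Real in
/-- Propagation of polynomial decay at infinity for the solution
by characteristics of the continuity equation. -/
theorem stmt_5
    (v : ℝ → EuclideanSpace ℝ (Fin 3) → EuclideanSpace ℝ (Fin 3)) (N A D : ℝ)
    (hA : 0 < A) (hD : 0 ≤ D)
    (hv_smooth : ContDiff ℝ (⊤ : ℕ∞) (Function.uncurry v))
    (hdiv : ∀ t ≥ (0:ℝ), ∀ y,
      |LinearMap.trace ℝ (EuclideanSpace ℝ (Fin 3)) (fderiv ℝ (v t) y).toLinearMap| ≤ N)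
    (hv_growth : ∀ t ≥ (0:ℝ), ∀ y, ‖v t y‖ ≤ A * ‖y‖ + D)
    (X Xinv : ℝ → EuclideanSpace ℝ (Fin 3) → EuclideanSpace ℝ (Fin 3))
    (hX0 : ∀ z, X 0 z = z)
    (hX : ∀ z, ∀ t ≥ (0:ℝ), HasDerivAt (fun s => X s z) (v t (X t z)) t)
    (hbij : ∀ t, Function.Bijective (X t))
    (hinv : ∀ t z, X t (Xinv t z) = z ∧ Xinv t (X t z) = z)
    (ρ₀ : EuclideanSpace ℝ (Fin 3) → ℝ)
    (hmeas : Measurable ρ₀) (hnonneg : ∀ y, 0 ≤ ρ₀ y)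
    (ρ : ℝ → EuclideanSpace ℝ (Fin 3) → ℝ)
    (hρ : ∀ t x, ρ t x = ρ₀ (Xinv t x) *
      Real.exp (∫ s in (0:ℝ)..t,
        LinearMap.trace ℝ (EuclideanSpace ℝ (Fin 3))
          (fderiv ℝ (v s) (X s (Xinv t x))).toLinearMap))
    (d₀ K M : ℝ) (hd₀ : 0 ≤ d₀) (hK : 0 < K) (hM : 0 < M)
    (hdec : ∀ y : EuclideanSpace ℝ (Fin 3), M ≤ ‖y‖ → ρ₀ y ≤ d₀ / ‖y‖ ^ K) :
    ∀ t ≥ (0:ℝ), ∀ x : EuclideanSpace ℝ (Fin 3),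
      2 * M * Real.exp (A * t) + 2 * D * (Real.exp (A * t) - 1) / A ≤ ‖x‖ →
      ρ t x ≤ d₀ * 2 ^ K * Real.exp ((N + A * K) * t) / ‖x‖ ^ K := by
  intro t ht x hx
  set z := Xinv t x with hz
  have hexp1 : (1:ℝ) ≤ Real.exp (A * t) := by
    rw [← Real.exp_zero]; exact Real.exp_le_exp.2 (by positivity)
  have hE1 : 0 ≤ Real.exp (A * t) - 1 := by linarith
  have hxpos : 0 < ‖x‖ := lt_of_lt_of_le (by
    have h1 : 0 < 2 * M * Real.exp (A * t) := by positivity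
    have h2 : 0 ≤ 2 * D * (Real.exp (A * t) - 1) / A := by positivity
    linarith) hx
  -- Gronwall bound on the flow
  have hflow : ∀ w : EuclideanSpace ℝ (Fin 3),
      ‖X t w‖ ≤ ‖w‖ * Real.exp (A * t) + D / A * (Real.exp (A * t) - 1) := by
    intro w
    have hcont : ContinuousOn (fun s => X s w) (Icc 0 t) := fun s hs =>
      ((hX w s hs.1).continuousAt).continuousWithinAt
    have := norm_le_gronwallBound_of_norm_deriv_right_le (f := fun s => X s w)
      (f' := fun s => v s (X s w)) (δ := ‖w‖) (K := A) (ε := D) (a := 0) (b := t)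
      hcont (fun s hs => ((hX w s hs.1).hasDerivWithinAt))
      (by show ‖X 0 w‖ ≤ ‖w‖; rw [hX0]) (fun s hs => hv_growth s hs.1 (X s w)) t ⟨ht, le_refl t⟩
    rw [gronwallBound_of_K_ne_0 hA.ne'] at this
    simpa using this
  have hXz : X t z = x := (hinv t x).1
  have hxle : ‖x‖ ≤ ‖z‖ * Real.exp (A * t) + D / A * (Real.exp (A * t) - 1) := by
    rw [← hXz]; exact hflow z
  have hDA : D / A * (Real.exp (A * t) - 1) ≤ ‖x‖ / 2 := by
    have : 2 * D * (Real.exp (A * t) - 1) / A ≤ ‖x‖ := by nlinarith [Real.exp_pos (A*t), mul_pos (mul_pos two_pos hM) (Real.exp_pos (A*t))]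
    rw [div_mul_eq_mul_div, div_le_div_iff₀ hA two_pos]
    rw [div_le_iff₀ hA] at this
    nlinarith
  have hzlb : ‖x‖ / (2 * Real.exp (A * t)) ≤ ‖z‖ := by
    rw [div_le_iff₀ (by positivity)]
    nlinarith
  have hMlb : M ≤ ‖x‖ / (2 * Real.exp (A * t)) := by
    rw [le_div_iff₀ (by positivity)]
    nlinarith [Real.exp_pos (A*t), hD, mul_nonneg (mul_nonneg (by norm_num : (0:ℝ)≤2) hD) (sub_nonneg.2 hexp1), div_nonneg (mul_nonneg (mul_nonneg (by norm_num : (0:ℝ)≤2) hD) (sub_nonneg.2 hexp1)) hA.le]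
  have hMz : M ≤ ‖z‖ := hMlb.trans hzlb
  -- bound on ρ₀ z
  have hzpos : (0:ℝ) < ‖z‖ := hM.trans_le hMz
  have hcpos : (0:ℝ) < ‖x‖ / (2 * Real.exp (A * t)) := hM.trans_le hMlb
  have hρ₀ : ρ₀ z ≤ d₀ * 2 ^ K * Real.exp (A * K * t) / ‖x‖ ^ K := by
    have h1 : ρ₀ z ≤ d₀ / ‖z‖ ^ K := hdec z hMz
    have h2 : (‖x‖ / (2 * Real.exp (A * t))) ^ K ≤ ‖z‖ ^ K :=
      Real.rpow_le_rpow hcpos.le hzlb hK.le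
    have h3 : d₀ / ‖z‖ ^ K ≤ d₀ / (‖x‖ / (2 * Real.exp (A * t))) ^ K :=
      div_le_div_of_nonneg_left hd₀ (Real.rpow_pos_of_pos hcpos K) h2
    have h4 : (‖x‖ / (2 * Real.exp (A * t))) ^ K = ‖x‖ ^ K / (2 ^ K * Real.exp (A * K * t)) := by
      rw [Real.div_rpow hxpos.le (by positivity), Real.mul_rpow (by norm_num) (Real.exp_pos _).le,
        ← Real.exp_mul]
      ring_nf
    calc ρ₀ z ≤ d₀ / ‖z‖ ^ K := h1
      _ ≤ d₀ / (‖x‖ / (2 * Real.exp (A * t))) ^ K := h3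
      _ = d₀ * 2 ^ K * Real.exp (A * K * t) / ‖x‖ ^ K := by
          rw [h4]
          field_simp
  -- bound on the exponential factor
  have hInt : (∫ s in (0:ℝ)..t,
      LinearMap.trace ℝ (EuclideanSpace ℝ (Fin 3))
        (fderiv ℝ (v s) (X s z)).toLinearMap) ≤ N * t := by
    have hFc : Continuous (fun p : ℝ × EuclideanSpace ℝ (Fin 3) =>
        fderiv ℝ (v p.1) p.2) := by
      have huf : ContDiff ℝ (⊤ : ℕ∞) (Function.uncurry
          (fun (p : ℝ × EuclideanSpace ℝ (Fin 3)) y => v p.1 y)) :=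
        hv_smooth.comp (((contDiff_fst.fst : ContDiff ℝ (⊤ : ℕ∞) (fun p : (ℝ × EuclideanSpace ℝ (Fin 3)) × EuclideanSpace ℝ (Fin 3) => p.1.1))).prodMk contDiff_snd)
      have : ContDiff ℝ (⊤ : ℕ∞) (fun p : ℝ × EuclideanSpace ℝ (Fin 3) =>
          fderiv ℝ (v p.1) p.2) :=
        ContDiff.fderiv (f := fun (p : ℝ × EuclideanSpace ℝ (Fin 3)) y => v p.1 y)
          (g := Prod.snd) huf contDiff_snd (by simp)
      exact this.continuous
    have hXc : ContinuousOn (fun s => X s z) (Icc 0 t) := fun s hs =>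
      ((hX z s hs.1).continuousAt).continuousWithinAt
    have hgc : ContinuousOn (fun s =>
        LinearMap.trace ℝ (EuclideanSpace ℝ (Fin 3))
          (fderiv ℝ (v s) (X s z)).toLinearMap) (Icc 0 t) := by
      have h5 : ContinuousOn (fun s => fderiv ℝ (v s) (X s z)) (Icc 0 t) :=
        hFc.comp_continuousOn (f := fun s => (s, X s z)) (continuousOn_id.prodMk hXc)
      have htr : Continuous (fun (L : EuclideanSpace ℝ (Fin 3) →L[ℝ] EuclideanSpace ℝ (Fin 3)) =>
          LinearMap.trace ℝ (EuclideanSpace ℝ (Fin 3)) L.toLinearMap) :=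
        LinearMap.continuous_of_finiteDimensional
          ((LinearMap.trace ℝ (EuclideanSpace ℝ (Fin 3))).comp (ContinuousLinearMap.coeLM ℝ))
      exact htr.comp_continuousOn h5
    have hint : IntervalIntegrable (fun s =>
        LinearMap.trace ℝ (EuclideanSpace ℝ (Fin 3))
          (fderiv ℝ (v s) (X s z)).toLinearMap) MeasureTheory.volume 0 t :=
      (hgc.mono (by rw [Set.uIcc_of_le ht])).intervalIntegrable
    calc (∫ s in (0:ℝ)..t, _) ≤ ∫ s in (0:ℝ)..t, N := by
          apply intervalIntegral.integral_mono_on ht hint intervalIntegrable_const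
          intro s hs
          exact (abs_le.1 (hdiv s hs.1 (X s z))).2
      _ = N * t := by simp [mul_comm]
  -- conclude
  rw [hρ t x, ← hz]
  have hexp2 : Real.exp (∫ s in (0:ℝ)..t,
      LinearMap.trace ℝ (EuclideanSpace ℝ (Fin 3))
        (fderiv ℝ (v s) (X s z)).toLinearMap) ≤ Real.exp (N * t) :=
    Real.exp_le_exp.2 hInt
  have hρ₀z : 0 ≤ ρ₀ z := hnonneg z
  calc ρ₀ z * Real.exp (∫ s in (0:ℝ)..t,
        LinearMap.trace ℝ (EuclideanSpace ℝ (Fin 3))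
          (fderiv ℝ (v s) (X s z)).toLinearMap)
      ≤ (d₀ * 2 ^ K * Real.exp (A * K * t) / ‖x‖ ^ K) * Real.exp (N * t) := by
        apply mul_le_mul hρ₀ hexp2 (Real.exp_pos _).le
        positivity
    _ = d₀ * 2 ^ K * Real.exp ((N + A * K) * t) / ‖x‖ ^ K := by
        rw [div_mul_eq_mul_div, mul_assoc, ← Real.exp_add]
        ring_nf
end

section
/- For every integer k ≥ 1 and all real numbers a > 0 and b > 0, one has a·b·(log₊(a·b))^k ≤ 2^{k−1}·((k/e)^k + 1)·b² + 2^{3(k−1)}·a²·(log₊ a)^{2k}. -/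
/-!
Write `a * b = a * a * (b / a)`, so that `log⁺ (a b) ≤ 2 log⁺ a + log⁺ (b / a)` and, by convexity of
`t ↦ t ^ k`, `log⁺ (a b) ^ k ≤ 2 ^ (k - 1) ((2 log⁺ a) ^ k + log⁺ (b / a) ^ k)`. The term with `b / a`
is absorbed by `log⁺ t ^ k ≤ (k / e) ^ k t` (from `log s ≤ s / e` applied to `s = t ^ (1 / k)`), and
the term with `a` by `2 x y ≤ x ^ 2 + y ^ 2` with `x = b`.
-/

open Real

namespace Real

lemma posLog_le_div_exp_one {x : ℝ} (hx : 0 ≤ x) : log⁺ x ≤ x / exp 1 := by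
  refine max_le (by positivity) ?_
  rcases hx.eq_or_lt with rfl | hx
  · simp
  have h := log_le_sub_one_of_pos (div_pos hx (exp_pos 1))
  rw [log_div hx.ne' (exp_pos 1).ne', log_exp] at h
  linarith

lemma posLog_pow_le {k : ℕ} (hk : k ≠ 0) {x : ℝ} (hx : 0 ≤ x) :
    log⁺ x ^ k ≤ (k / exp 1) ^ k * x := by
  set y := x ^ (k⁻¹ : ℝ)
  have hy : 0 ≤ y := rpow_nonneg hx _
  have hyk : y ^ k = x := rpow_inv_natCast_pow hx hk
  calc log⁺ x ^ k = (k * log⁺ y) ^ k := by rw [← posLog_pow, hyk]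
    _ ≤ (k * (y / exp 1)) ^ k := pow_le_pow_left₀ (mul_nonneg k.cast_nonneg posLog_nonneg)
          (mul_le_mul_of_nonneg_left (posLog_le_div_exp_one hy) k.cast_nonneg) k
    _ = (k / exp 1) ^ k * x := by rw [← hyk]; ring

lemma posLog_mul_le_two_mul_posLog_add_posLog_div {a b : ℝ} (ha : a ≠ 0) :
    log⁺ (a * b) ≤ 2 * log⁺ a + log⁺ (b / a) :=
  calc log⁺ (a * b) = log⁺ (a * a * (b / a)) := by rw [mul_assoc, mul_div_cancel₀ b ha]
    _ ≤ log⁺ (a * a) + log⁺ (b / a) := posLog_mul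
    _ ≤ 2 * log⁺ a + log⁺ (b / a) := by linarith [posLog_mul (x := a) (y := a)]

lemma posLog_mul_pow_le (k : ℕ) {a b : ℝ} (ha : a ≠ 0) :
    log⁺ (a * b) ^ k ≤ 2 ^ (k - 1) * ((2 * log⁺ a) ^ k + log⁺ (b / a) ^ k) :=
  calc log⁺ (a * b) ^ k ≤ (2 * log⁺ a + log⁺ (b / a)) ^ k :=
        pow_le_pow_left₀ posLog_nonneg (posLog_mul_le_two_mul_posLog_add_posLog_div ha) k
    _ ≤ 2 ^ (k - 1) * ((2 * log⁺ a) ^ k + log⁺ (b / a) ^ k) :=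
        add_pow_le (mul_nonneg zero_le_two posLog_nonneg) posLog_nonneg k

lemma mul_mul_posLog_div_pow_le {k : ℕ} (hk : k ≠ 0) {a b : ℝ} (ha : 0 < a) (hb : 0 ≤ b) :
    a * b * log⁺ (b / a) ^ k ≤ (k / exp 1) ^ k * b ^ 2 :=
  calc a * b * log⁺ (b / a) ^ k ≤ a * b * ((k / exp 1) ^ k * (b / a)) := by
        gcongr
        exact posLog_pow_le hk (by positivity)
    _ = (k / exp 1) ^ k * b ^ 2 := by field_simp

end Real

lemma mul_mul_two_mul_pow_succ_le (m : ℕ) (x y c : ℝ) :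
    x * y * (2 * c) ^ (m + 1) ≤ y ^ 2 + 2 ^ (2 * m) * x ^ 2 * c ^ (2 * (m + 1)) :=
  calc x * y * (2 * c) ^ (m + 1) = 2 * y * (2 ^ m * x * c ^ (m + 1)) := by ring
    _ ≤ y ^ 2 + (2 ^ m * x * c ^ (m + 1)) ^ 2 := two_mul_le_add_sq _ _
    _ = y ^ 2 + 2 ^ (2 * m) * x ^ 2 * c ^ (2 * (m + 1)) := by ring

/-- The numerical inequality
`a b log₊ᵏ(a b) ≤ 2^{k-1}((k/e)^k + 1) b² + 2^{3(k-1)} a² log₊^{2k} a`. -/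
theorem stmt_7 (k : ℕ) (hk : 1 ≤ k) (a b : ℝ) (ha : 0 < a) (hb : 0 < b) :
    a * b * (max (Real.log (a * b)) 0) ^ k ≤
      (2:ℝ) ^ (k - 1) * (((k : ℝ) / Real.exp 1) ^ k + 1) * b ^ 2 +
        (2:ℝ) ^ (3 * (k - 1)) * a ^ 2 * (max (Real.log a) 0) ^ (2 * k) := by
  obtain ⟨m, rfl⟩ : ∃ m, k = m + 1 := ⟨k - 1, by omega⟩
  rw [max_comm, max_comm (log a), ← posLog_apply, ← posLog_apply, Nat.add_sub_cancel]
  set L := log⁺ a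
  have hsplit := posLog_mul_pow_le (m + 1) (b := b) ha.ne'
  rw [Nat.add_sub_cancel] at hsplit
  have hN := mul_mul_posLog_div_pow_le m.add_one_ne_zero ha hb.le
  have hL := mul_mul_two_mul_pow_succ_le m a b L
  calc a * b * log⁺ (a * b) ^ (m + 1)
      ≤ 2 ^ m * (a * b * (2 * L) ^ (m + 1) + a * b * log⁺ (b / a) ^ (m + 1)) :=
        (mul_le_mul_of_nonneg_left hsplit (by positivity)).trans_eq (by ring)
    _ ≤ 2 ^ m * ((b ^ 2 + 2 ^ (2 * m) * a ^ 2 * L ^ (2 * (m + 1))) +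
          ((m + 1 : ℕ) / exp 1) ^ (m + 1) * b ^ 2) := by gcongr
    _ = 2 ^ m * (((m + 1 : ℕ) / exp 1) ^ (m + 1) + 1) * b ^ 2 +
          2 ^ (3 * m) * a ^ 2 * L ^ (2 * (m + 1)) := by ring
end

section
/- Let A be a real symmetric 3×3 matrix and let 0 < c₁ ≤ c₂ be real numbers such that c₁·Id ≤ A ≤ c₂·Id in the Loewner order (i.e., A − c₁·Id and c₂·Id − A are positive semidefinite). Then the cofactor matrix M(A) of A (which equals the adjugate of A, since A is symmetric) satisfies c₁²·Id ≤ M(A) ≤ c₂²·Id in the Loewner order. -/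
/-!
Diagonalize `A = U D U*` with `D = diagonal λ` and `U` unitary. The adjugate commutes with
unitary conjugation, so `adj A = U (adj D) U*` with `adj D = diagonal (i ↦ ∏_{j ≠ i} λ j)`.
For matrices of this form, `c • 1 ≤ U (diagonal d) U* ≤ c' • 1` just says `c ≤ d i ≤ c'` for all
`i`. So `c₁ ≤ λ ≤ c₂` with `c₁ ≥ 0` gives `c₁ ^ (n - 1) ≤ ∏_{j ≠ i} λ j ≤ c₂ ^ (n - 1)`.
-/

open Matrix Finset
open scoped ComplexOrder

namespace Matrix

variable {n : Type*} [Fintype n] [DecidableEq n]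

theorem adjugate_of_mem_unitaryGroup {R : Type*} [CommRing R] [StarRing R] {U : Matrix n n R}
    (hU : U ∈ unitaryGroup n R) : adjugate U = U.det • star U := by
  calc adjugate U = star U * U * adjugate U := by rw [Unitary.star_mul_self_of_mem hU, one_mul]
    _ = U.det • star U := by rw [mul_assoc, mul_adjugate, Matrix.mul_smul, mul_one]

theorem adjugate_unitary_conj {R : Type*} [CommRing R] [StarRing R] {U : Matrix n n R}
    (hU : U ∈ unitaryGroup n R) (B : Matrix n n R) :
    adjugate (U * B * star U) = U * adjugate B * star U := by
  have hdet : U.det * star U.det = 1 := Unitary.mul_star_self_of_mem (det_of_mem_unitary hU)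
  rw [adjugate_mul_distrib, adjugate_mul_distrib, adjugate_of_mem_unitaryGroup hU,
    adjugate_of_mem_unitaryGroup (Unitary.star_mem hU), star_star, star_eq_conjTranspose U,
    det_conjTranspose, ← star_eq_conjTranspose]
  simp only [Matrix.smul_mul, Matrix.mul_smul, smul_smul, hdet, one_smul, mul_assoc]

variable {𝕜 : Type*} [RCLike 𝕜]

theorem smul_one_eq_unitary_conj (U : unitaryGroup n 𝕜) (c : ℝ) :
    (c • 1 : Matrix n n 𝕜) = U * (c • 1) * star (U : Matrix n n 𝕜) := by
  rw [Matrix.mul_smul, Matrix.smul_mul, mul_one, Unitary.mul_star_self_of_mem U.2]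

theorem posSemidef_unitary_conj_diagonal_sub_smul_one_iff (U : unitaryGroup n 𝕜) (d : n → ℝ)
    (c : ℝ) :
    ((U : Matrix n n 𝕜) * diagonal (RCLike.ofReal ∘ d) * star (U : Matrix n n 𝕜) -
      c • 1).PosSemidef ↔ ∀ i, c ≤ d i := by
  rw [smul_one_eq_unitary_conj U, ← sub_mul, ← mul_sub,
    Unitary.isUnit_coe.posSemidef_star_right_conjugate_iff]
  have hdiag : diagonal (RCLike.ofReal ∘ d) - (c • 1 : Matrix n n 𝕜) =
      diagonal (RCLike.ofReal ∘ (d - fun _ => c)) := by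
    ext i j; by_cases h : i = j <;> simp [h, RCLike.real_smul_eq_coe_mul]
  rw [hdiag, posSemidef_diagonal_iff]
  simp

theorem posSemidef_smul_one_sub_unitary_conj_diagonal_iff (U : unitaryGroup n 𝕜) (d : n → ℝ)
    (c : ℝ) :
    (c • 1 - (U : Matrix n n 𝕜) * diagonal (RCLike.ofReal ∘ d) *
      star (U : Matrix n n 𝕜)).PosSemidef ↔ ∀ i, d i ≤ c := by
  rw [smul_one_eq_unitary_conj U, ← sub_mul, ← mul_sub,
    Unitary.isUnit_coe.posSemidef_star_right_conjugate_iff]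
  have hdiag : (c • 1 : Matrix n n 𝕜) - diagonal (RCLike.ofReal ∘ d) =
      diagonal (RCLike.ofReal ∘ ((fun _ => c) - d)) := by
    ext i j; by_cases h : i = j <;> simp [h, RCLike.real_smul_eq_coe_mul]
  rw [hdiag, posSemidef_diagonal_iff]
  simp

namespace IsHermitian

variable {A : Matrix n n 𝕜} (hA : A.IsHermitian)
include hA

theorem eq_unitary_conj_diagonal :
    A = (hA.eigenvectorUnitary : Matrix n n 𝕜) * diagonal (RCLike.ofReal ∘ hA.eigenvalues) *
      star (hA.eigenvectorUnitary : Matrix n n 𝕜) := by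
  conv_lhs => rw [hA.spectral_theorem, Unitary.conjStarAlgAut_apply]

theorem posSemidef_sub_smul_one_iff (c : ℝ) :
    (A - c • 1).PosSemidef ↔ ∀ i, c ≤ hA.eigenvalues i := by
  conv_lhs => rw [hA.eq_unitary_conj_diagonal]
  exact posSemidef_unitary_conj_diagonal_sub_smul_one_iff _ _ c

theorem posSemidef_smul_one_sub_iff (c : ℝ) :
    (c • 1 - A).PosSemidef ↔ ∀ i, hA.eigenvalues i ≤ c := by
  conv_lhs => rw [hA.eq_unitary_conj_diagonal]
  exact posSemidef_smul_one_sub_unitary_conj_diagonal_iff _ _ c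

theorem adjugate_eq_unitary_conj_diagonal :
    A.adjugate = (hA.eigenvectorUnitary : Matrix n n 𝕜) *
      diagonal (RCLike.ofReal ∘ fun i => ∏ j ∈ univ.erase i, hA.eigenvalues j) *
      star (hA.eigenvectorUnitary : Matrix n n 𝕜) := by
  conv_lhs => rw [hA.eq_unitary_conj_diagonal]
  rw [adjugate_unitary_conj hA.eigenvectorUnitary.2, adjugate_diagonal]
  congr 3
  ext i
  simp

theorem posSemidef_adjugate_sub_pow_smul_one {c : ℝ} (hc : 0 ≤ c) (h : (A - c • 1).PosSemidef) :
    (A.adjugate - c ^ (Fintype.card n - 1) • 1).PosSemidef := by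
  rw [hA.posSemidef_sub_smul_one_iff] at h
  rw [hA.adjugate_eq_unitary_conj_diagonal, posSemidef_unitary_conj_diagonal_sub_smul_one_iff]
  intro i
  calc c ^ (Fintype.card n - 1) = ∏ _j ∈ univ.erase i, c := by
        rw [prod_const, card_erase_of_mem (mem_univ i), card_univ]
    _ ≤ ∏ j ∈ univ.erase i, hA.eigenvalues j := prod_le_prod (fun _ _ => hc) (fun j _ => h j)

end IsHermitian

theorem PosSemidef.posSemidef_pow_smul_one_sub_adjugate {A : Matrix n n 𝕜} (hA : A.PosSemidef)
    {c : ℝ} (h : (c • 1 - A).PosSemidef) :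
    (c ^ (Fintype.card n - 1) • 1 - A.adjugate).PosSemidef := by
  rw [hA.isHermitian.posSemidef_smul_one_sub_iff] at h
  rw [hA.isHermitian.adjugate_eq_unitary_conj_diagonal,
    posSemidef_smul_one_sub_unitary_conj_diagonal_iff]
  intro i
  calc ∏ j ∈ univ.erase i, hA.isHermitian.eigenvalues j ≤ ∏ _j ∈ univ.erase i, c :=
        prod_le_prod (fun j _ => hA.eigenvalues_nonneg j) (fun j _ => h j)
    _ = c ^ (Fintype.card n - 1) := by rw [prod_const, card_erase_of_mem (mem_univ i), card_univ]

end Matrix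

theorem stmt_8_general (A : Matrix (Fin 3) (Fin 3) ℝ) (hA : A.IsSymm)
    (c₁ c₂ : ℝ) (hc₁ : 0 < c₁)
    (h₁ : (A - c₁ • (1 : Matrix (Fin 3) (Fin 3) ℝ)).PosSemidef)
    (h₂ : (c₂ • (1 : Matrix (Fin 3) (Fin 3) ℝ) - A).PosSemidef) :
    ((A.adjugate)ᵀ - c₁ ^ 2 • (1 : Matrix (Fin 3) (Fin 3) ℝ)).PosSemidef ∧
    (c₂ ^ 2 • (1 : Matrix (Fin 3) (Fin 3) ℝ) - (A.adjugate)ᵀ).PosSemidef := by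
  have hA_herm : A.IsHermitian := isHermitian_iff_isSymm.mpr hA
  have hA_psd : A.PosSemidef := by
    simpa using h₁.add ((PosSemidef.one).smul hc₁.le)
  rw [adjugate_transpose, hA.eq]
  exact ⟨hA_herm.posSemidef_adjugate_sub_pow_smul_one hc₁.le h₁,
    hA_psd.posSemidef_pow_smul_one_sub_adjugate h₂⟩

/-- Loewner-order bounds on the cofactor matrix of a symmetric
3×3 matrix with `c₁ Id ≤ A ≤ c₂ Id`. -/
theorem stmt_8 (A : Matrix (Fin 3) (Fin 3) ℝ) (hA : A.IsSymm)
    (c₁ c₂ : ℝ) (hc₁ : 0 < c₁) (hc₁₂ : c₁ ≤ c₂)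
    (h₁ : (A - c₁ • (1 : Matrix (Fin 3) (Fin 3) ℝ)).PosSemidef)
    (h₂ : (c₂ • (1 : Matrix (Fin 3) (Fin 3) ℝ) - A).PosSemidef) :
    ((A.adjugate)ᵀ - c₁ ^ 2 • (1 : Matrix (Fin 3) (Fin 3) ℝ)).PosSemidef ∧
    (c₂ ^ 2 • (1 : Matrix (Fin 3) (Fin 3) ℝ) - (A.adjugate)ᵀ).PosSemidef :=
  stmt_8_general A hA c₁ c₂ hc₁ h₁ h₂
end

section
/- For every r > 0 and every natural number k, the function w ↦ |w| · (log₊(|w|/r))^k is convex on ℝ³. -/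
/-!
The function is `g ∘ ‖·‖` with `g t = t * φ (log t)` and `φ u = max (u - log r) 0 ^ k` convex and
nondecreasing, so it suffices that `g` is convex and nondecreasing on `[0, ∞)`. For `t = a x + b y`,
convexity of `s ↦ s log s` says that `log t` is at most the average of `log x`, `log y` with weights
`a x / t`, `b y / t`; applying the nondecreasing convex `φ` and Jensen for these weights gives
`t φ (log t) ≤ a x φ (log x) + b y φ (log y)`.
-/

open Real Set

theorem convexOn_mul_comp_log {φ : ℝ → ℝ} (hφ : ConvexOn ℝ univ φ) (hφm : Monotone φ) :
    ConvexOn ℝ (Ici 0) (fun t => t * φ (log t)) := by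
  refine ⟨convex_Ici 0, fun x hx y hy a b ha hb hab => ?_⟩
  simp only [smul_eq_mul, mem_Ici] at hx hy ⊢
  have hax : 0 ≤ a * x := mul_nonneg ha hx
  have hby : 0 ≤ b * y := mul_nonneg hb hy
  rcases (add_nonneg hax hby).eq_or_lt with ht | ht
  · have hax0 : a * x = 0 := by linarith
    have hby0 : b * y = 0 := by linarith
    rw [← ht, zero_mul, ← mul_assoc, ← mul_assoc, hax0, hby0]
    simp
  set t := a * x + b * y
  have hlog : log t ≤ a * x / t * log x + b * y / t * log y := by
    have h := convexOn_mul_log.2 (mem_Ici.2 hx) (mem_Ici.2 hy) ha hb hab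
    simp only [smul_eq_mul] at h
    have hdiff : a * x / t * log x + b * y / t * log y - log t
        = (a * (x * log x) + b * (y * log y) - t * log t) / t := by
      field_simp
    rw [← sub_nonneg, hdiff]
    exact div_nonneg (sub_nonneg.2 h) ht.le
  have hjensen := hφ.2 (mem_univ (log x)) (mem_univ (log y)) (div_nonneg hax ht.le)
    (div_nonneg hby ht.le) (by rw [← add_div, div_self ht.ne'])
  simp only [smul_eq_mul] at hjensen
  calc t * φ (log t) ≤ t * φ (a * x / t * log x + b * y / t * log y) := by gcongr; exact hφm hlog
    _ ≤ t * (a * x / t * φ (log x) + b * y / t * φ (log y)) :=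
        mul_le_mul_of_nonneg_left hjensen ht.le
    _ = a * (x * φ (log x)) + b * (y * φ (log y)) := by field_simp

theorem monotoneOn_mul_comp_log {φ : ℝ → ℝ} (hφ₀ : ∀ u, 0 ≤ φ u) (hφm : Monotone φ) :
    MonotoneOn (fun t => t * φ (log t)) (Ici 0) := by
  intro s hs t ht hst
  rcases (mem_Ici.1 hs).eq_or_lt with rfl | hs
  · simpa using mul_nonneg ht (hφ₀ _)
  · exact mul_le_mul hst (hφm (log_le_log hs hst)) (hφ₀ _) (mem_Ici.1 ht)

theorem ConvexOn.comp_norm {E : Type*} [SeminormedAddCommGroup E] [NormedSpace ℝ E] {g : ℝ → ℝ}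
    (hg : ConvexOn ℝ (Ici 0) g) (hgm : MonotoneOn g (Ici 0)) :
    ConvexOn ℝ univ (fun w : E => g ‖w‖) := by
  refine ⟨convex_univ, fun x _ y _ a b ha hb hab => ?_⟩
  calc g ‖a • x + b • y‖ ≤ g (a • ‖x‖ + b • ‖y‖) :=
        hgm (norm_nonneg _) (mem_Ici.2 (by simp only [smul_eq_mul]; positivity))
          (convexOn_univ_norm.2 (mem_univ x) (mem_univ y) ha hb hab)
    _ ≤ a • g ‖x‖ + b • g ‖y‖ := hg.2 (norm_nonneg x) (norm_nonneg y) ha hb hab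

theorem convexOn_norm_mul_max_log_div_zero_pow {E : Type*} [SeminormedAddCommGroup E]
    [NormedSpace ℝ E] {r : ℝ} (hr : 0 < r) (k : ℕ) :
    ConvexOn ℝ univ (fun w : E => ‖w‖ * max (log (‖w‖ / r)) 0 ^ k) := by
  set φ : ℝ → ℝ := fun u => max (u - log r) 0 ^ k
  have hφ₀ : ∀ u, 0 ≤ φ u := fun u => pow_nonneg (le_max_right _ _) k
  have hφm : Monotone φ := fun u v huv =>
    pow_le_pow_left₀ (le_max_right _ _) (by gcongr) k
  have hφ : ConvexOn ℝ univ φ := by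
    have hlin : ConvexOn ℝ univ (fun u : ℝ => u - log r) :=
      (convexOn_id convex_univ).sub (concaveOn_const _ convex_univ)
    exact (hlin.sup (convexOn_const 0 convex_univ)).pow (fun u _ => le_max_right _ _) k
  have hg : EqOn (fun t => t * φ (log t)) (fun t => t * max (log (t / r)) 0 ^ k) (Ici 0) := by
    intro t ht
    rcases (mem_Ici.1 ht).eq_or_lt with rfl | ht
    · simp
    · simp only [φ, log_div ht.ne' hr.ne']
  exact ((convexOn_mul_comp_log hφ hφm).congr hg).comp_norm
    ((monotoneOn_mul_comp_log hφ₀ hφm).congr hg)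

/-- Convexity of `w ↦ |w| log₊ᵏ(|w|/r)` on ℝ³. -/
theorem stmt_14 (r : ℝ) (hr : 0 < r) (k : ℕ) :
    ConvexOn ℝ Set.univ
      (fun w : EuclideanSpace ℝ (Fin 3) =>
        ‖w‖ * (max (Real.log (‖w‖ / r)) 0) ^ k) :=
  convexOn_norm_mul_max_log_div_zero_pow hr k
end
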